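/- Let f : V² → V be monotone, let σ⊥, σ⊤ ∈ V, and define h(x) = μz.f(σ⊥∨x∨z, σ⊥∨x∨z), L = μx.νy.f(h(x), σ⊤∧(h(x)∨y)), and R = μx.νy.f(σ⊥∨(σ⊤∧x), σ⊤∧(σ⊥∨(σ⊤∧x)∨y)). If σ⊥ ≤ L ≤ σ⊤, f(σ⊤,σ⊤) = σ⊤, and f(σ⊥,σ⊥) ≥ σ⊥, then L = R. -/
import Mathlib


/-- `μx.f(x)`, the least fixed point of a monotone `f` (Knaster–Tarski). -/
noncomputable def lfpOf {V : Type*} [CompleteLattice V] (f : V → V) : V :=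
  sInf {x | f x ≤ x}

/-- `νx.f(x)`, the greatest fixed point of a monotone `f` (Knaster–Tarski). -/
noncomputable def gfpOf {V : Type*} [CompleteLattice V] (f : V → V) : V :=
  sSup {x | x ≤ f x}

/-- `h(x) = μz.f(σ⊥∨x∨z, σ⊥∨x∨z)`. -/
noncomputable def hFun {V : Type*} [CompleteLattice V] (f : V → V → V) (σb x : V) : V :=
  lfpOf (fun z => f (σb ⊔ x ⊔ z) (σb ⊔ x ⊔ z))

/-- `L = μx.νy.f(h(x), σ⊤∧(h(x)∨y))`. -/
noncomputable def Lval {V : Type*} [CompleteLattice V] (f : V → V → V) (σb σt : V) : V :=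
  lfpOf (fun x => gfpOf (fun y => f (hFun f σb x) (σt ⊓ (hFun f σb x ⊔ y))))

/-- `R = μx.νy.f(σ⊥∨(σ⊤∧x), σ⊤∧(σ⊥∨(σ⊤∧x)∨y))`. -/
noncomputable def Rval {V : Type*} [CompleteLattice V] (f : V → V → V) (σb σt : V) : V :=
  lfpOf (fun x => gfpOf (fun y =>
    f (σb ⊔ (σt ⊓ x)) (σt ⊓ ((σb ⊔ (σt ⊓ x)) ⊔ y))))

section KTAux
variable {V : Type*} [CompleteLattice V]

lemma lfpOf_le' {f : V → V} {a : V} (h : f a ≤ a) : lfpOf f ≤ a := sInf_le h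

lemma lfpOf_mono' {f g : V → V} (h : ∀ x, f x ≤ g x) : lfpOf f ≤ lfpOf g :=
  sInf_le_sInf fun x hx => le_trans (h x) hx

lemma gfpOf_mono' {f g : V → V} (h : ∀ x, f x ≤ g x) : gfpOf f ≤ gfpOf g :=
  sSup_le_sSup fun x hx => le_trans hx (h x)

lemma lfpOf_fixed {f : V → V} (hf : Monotone f) : f (lfpOf f) = lfpOf f := by
  have h1 : f (lfpOf f) ≤ lfpOf f := le_sInf fun x hx => le_trans (hf (sInf_le hx)) hx
  exact le_antisymm h1 (sInf_le (hf h1))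

lemma gfpOf_fixed {f : V → V} (hf : Monotone f) : f (gfpOf f) = gfpOf f := by
  have h1 : gfpOf f ≤ f (gfpOf f) := sSup_le fun x hx => le_trans hx (hf (le_sSup hx))
  exact le_antisymm (le_sSup (hf h1)) h1

end KTAux

/-- Let `f : V² → V` be monotone and `σ⊥, σ⊤ ∈ V`.
If `σ⊥ ≤ L ≤ σ⊤`, `f(σ⊤,σ⊤) = σ⊤`, and `f(σ⊥,σ⊥) ≥ σ⊥`, then `L = R`. -/
theorem stmt15 {V : Type*} [CompleteLattice V] (f : V → V → V)
    (hf : Monotone fun p : V × V => f p.1 p.2) (σb σt : V)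
    (hb : σb ≤ Lval f σb σt) (ht : Lval f σb σt ≤ σt)
    (htop : f σt σt = σt) (hbot : σb ≤ f σb σb) :
    Lval f σb σt = Rval f σb σt := by
  -- curried monotonicity
  have hm : ∀ {a b c d : V}, a ≤ c → b ≤ d → f a b ≤ f c d := by
    intro a b c d h1 h2
    exact hf (show ((a, b) : V × V) ≤ (c, d) from ⟨h1, h2⟩)
  set h : V → V := hFun f σb with hh
  -- the generator of L
  set G : V → V := fun x => gfpOf (fun y => f (h x) (σt ⊓ (h x ⊔ y))) with hG
  -- the generator of R
  set H : V → V := fun x => gfpOf (fun y =>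
    f (σb ⊔ (σt ⊓ x)) (σt ⊓ ((σb ⊔ (σt ⊓ x)) ⊔ y))) with hH
  have hLdef : Lval f σb σt = lfpOf G := rfl
  have hRdef : Rval f σb σt = lfpOf H := rfl
  set L : V := Lval f σb σt with hL
  set R : V := Rval f σb σt with hR
  -- monotonicity facts
  have hinner_mono : ∀ x : V, Monotone fun z => f (σb ⊔ x ⊔ z) (σb ⊔ x ⊔ z) :=
    fun x z1 z2 hz => hm (sup_le_sup_left hz _) (sup_le_sup_left hz _)
  have hFix : ∀ x : V, f (σb ⊔ x ⊔ h x) (σb ⊔ x ⊔ h x) = h x :=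
    fun x => lfpOf_fixed (hinner_mono x)
  have hmono : Monotone h := by
    intro x1 x2 hx
    exact lfpOf_mono' fun z =>
      hm (sup_le_sup_right (sup_le_sup_left hx _) _)
         (sup_le_sup_right (sup_le_sup_left hx _) _)
  have hGy_mono : ∀ x : V, Monotone fun y => f (h x) (σt ⊓ (h x ⊔ y)) :=
    fun x y1 y2 hy => hm le_rfl (inf_le_inf_left _ (sup_le_sup_left hy _))
  have hHy_mono : ∀ x : V, Monotone fun y =>
      f (σb ⊔ (σt ⊓ x)) (σt ⊓ ((σb ⊔ (σt ⊓ x)) ⊔ y)) :=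
    fun x y1 y2 hy => hm le_rfl (inf_le_inf_left _ (sup_le_sup_left hy _))
  have hGmono : Monotone G := by
    intro x1 x2 hx
    exact gfpOf_mono' fun y =>
      hm (hmono hx) (inf_le_inf_left _ (sup_le_sup_right (hmono hx) _))
  have hHmono : Monotone H := by
    intro x1 x2 hx
    exact gfpOf_mono' fun y =>
      hm (sup_le_sup_left (inf_le_inf_left _ hx) _)
         (inf_le_inf_left _ (sup_le_sup_right (sup_le_sup_left (inf_le_inf_left _ hx) _) _))
  -- fixed point equations for L and R
  have hGL : G L = L := lfpOf_fixed hGmono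
  have hHR : H R = R := lfpOf_fixed hHmono
  have hbL : σb ⊔ L = L := sup_eq_right.mpr hb
  have htL : σt ⊓ L = L := inf_eq_right.mpr ht
  -- Step A : L ≤ h L
  have hLfix : f (h L) (σt ⊓ (h L ⊔ L)) = L := by
    have := gfpOf_fixed (hGy_mono L)
    rw [show gfpOf (fun y => f (h L) (σt ⊓ (h L ⊔ y))) = G L from rfl, hGL] at this
    exact this
  have hkfix : f (L ⊔ h L) (L ⊔ h L) = h L := by
    have := hFix L
    rwa [hbL] at this
  have hLk : L ≤ h L := by
    calc L = f (h L) (σt ⊓ (h L ⊔ L)) := hLfix.symm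
    _ ≤ f (L ⊔ h L) (L ⊔ h L) :=
        hm le_sup_right (le_trans inf_le_right (by rw [sup_comm]))
    _ = h L := hkfix
  -- Step B : H L ≤ L, hence R ≤ L
  have hHL : H L ≤ L := by
    have harg : σb ⊔ (σt ⊓ L) = L := by rw [htL, hbL]
    have : H L ≤ G L := by
      rw [hH]
      simp only [harg]
      exact gfpOf_mono' fun y =>
        hm hLk (inf_le_inf_left _ (sup_le_sup_right hLk _))
    rwa [hGL] at this
  have hRL : R ≤ L := lfpOf_le' hHL
  -- Step C : R = f (σb ⊔ R) (σb ⊔ R)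
  have hRt : R ≤ σt := le_trans hRL ht
  have hbt : σb ≤ σt := le_trans hb ht
  have htR : σt ⊓ R = R := inf_eq_right.mpr hRt
  have haR : σb ⊔ R ≤ σt := sup_le hbt hRt
  have hRfix : f (σb ⊔ R) (σb ⊔ R) = R := by
    have := gfpOf_fixed (hHy_mono R)
    rw [show gfpOf (fun y => f (σb ⊔ (σt ⊓ R)) (σt ⊓ ((σb ⊔ (σt ⊓ R)) ⊔ y))) = H R from rfl,
        hHR] at this
    rw [htR] at this
    rw [sup_assoc, sup_idem, inf_eq_right.mpr haR] at this
    exact this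
  -- Step D : h R ≤ σb ⊔ R
  have hhR : h R ≤ σb ⊔ R := by
    rw [hh]
    apply lfpOf_le'
    rw [show σb ⊔ R ⊔ (σb ⊔ R) = σb ⊔ R from sup_idem _, hRfix]
    exact le_sup_right
  -- Step E : G R ≤ R, hence L ≤ R
  have hGR : G R ≤ R := by
    have : G R ≤ H R := by
      rw [hH]
      simp only [htR]
      exact gfpOf_mono' fun y =>
        hm hhR (inf_le_inf_left _ (sup_le_sup_right hhR _))
    rwa [hHR] at this
  have hLR : L ≤ R := lfpOf_le' hGR
  exact le_antisymm hLR hRL
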